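/- arXiv:1111.4004 — 3 statements merged into one kernel-verified Lean document; each statement's English description precedes it below -/
import Mathlib

section
/- Let F be a field, n(y), d(y) ∈ F[y] nonzero coprime polynomials with N = deg n, D = deg d. Let p ∈ F[x] be nonzero of grade g and q(y) = Σ_i p_i n(y)^i d(y)^{g-i}. If N ≠ D then deg q = g·D + max{ i·(N−D) : p_i ≠ 0 }. -/
open Polynomial Finset

/-! Each nonzero coefficient `pᵢ` contributes a term `pᵢ nⁱ d^(g-i)` of degree
`i N + (g - i) D = g D + i (N - D)`. Since `N ≠ D` these degrees are pairwise distinct, so no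
cancellation occurs and the degree of the sum is the largest of them. -/

lemma Nat.cast_mul_add_tsub_mul {i g : ℕ} (hi : i ≤ g) (N D : ℕ) :
    ((i * N + (g - i) * D : ℕ) : ℤ) = g * D + i * ((N : ℤ) - D) := by
  push_cast [hi]
  ring

lemma Nat.eq_of_mul_add_tsub_mul_eq {N D g i j : ℕ} (hND : N ≠ D) (hi : i ≤ g) (hj : j ≤ g)
    (h : i * N + (g - i) * D = j * N + (g - j) * D) : i = j := by
  have hcast := congrArg (fun m : ℕ => (m : ℤ)) h
  simp only [Nat.cast_mul_add_tsub_mul hi, Nat.cast_mul_add_tsub_mul hj, add_right_inj] at hcast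
  have hND' : (N : ℤ) - D ≠ 0 := sub_ne_zero.mpr (by exact_mod_cast hND)
  exact_mod_cast mul_right_cancel₀ hND' hcast

namespace Polynomial

variable {R : Type*} [CommSemiring R] {n d p : R[X]}

lemma sum_range_C_coeff_mul_pow_mul_pow_eq_sum_support {g : ℕ} (hg : p.natDegree ≤ g) :
    ∑ i ∈ range (g + 1), C (p.coeff i) * n ^ i * d ^ (g - i) =
      ∑ i ∈ p.support, C (p.coeff i) * n ^ i * d ^ (g - i) := by
  rw [← sum_def (f := fun i a => C a * n ^ i * d ^ (g - i)),
    sum_over_range' _ (fun _ => by simp) _ (Nat.lt_succ_of_le hg)]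

variable [NoZeroDivisors R]

lemma natDegree_C_mul_pow_mul_pow {a : R} (ha : a ≠ 0) (hn : n ≠ 0) (hd : d ≠ 0) (i j : ℕ) :
    (C a * n ^ i * d ^ j).natDegree = i * n.natDegree + j * d.natDegree := by
  rw [natDegree_mul (mul_ne_zero (C_ne_zero.mpr ha) (pow_ne_zero _ hn)) (pow_ne_zero _ hd),
    natDegree_C_mul ha, natDegree_pow, natDegree_pow]

theorem natDegree_sum_C_coeff_mul_pow_mul_pow (hn : n ≠ 0) (hd : d ≠ 0)
    (hND : n.natDegree ≠ d.natDegree) {g : ℕ} (hg : p.natDegree ≤ g) :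
    (∑ i ∈ range (g + 1), C (p.coeff i) * n ^ i * d ^ (g - i)).natDegree =
      p.support.sup fun i => i * n.natDegree + (g - i) * d.natDegree := by
  have hle : ∀ i ∈ p.support, i ≤ g := fun i hi => (le_natDegree_of_mem_supp i hi).trans hg
  have hdeg : ∀ i ∈ p.support, (C (p.coeff i) * n ^ i * d ^ (g - i)).natDegree =
      i * n.natDegree + (g - i) * d.natDegree := fun i hi =>
    natDegree_C_mul_pow_mul_pow (mem_support_iff.mp hi) hn hd i (g - i)
  rw [sum_range_C_coeff_mul_pow_mul_pow_eq_sum_support hg, natDegree_sum_eq_of_disjoint]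
  · exact sup_congr rfl hdeg
  · rintro i ⟨hi, -⟩ j ⟨hj, -⟩ hij hdeg_eq
    simp only [Function.comp_apply, hdeg i hi, hdeg j hj] at hdeg_eq
    exact hij (Nat.eq_of_mul_add_tsub_mul_eq hND (hle i hi) (hle j hj) hdeg_eq)

end Polynomial

theorem stmt_1_general {F : Type*} [Field F] (n d : F[X]) (hn : n ≠ 0) (hd : d ≠ 0)
    (N D : ℕ) (hN : N = n.natDegree) (hD : D = d.natDegree)
    (hND : N ≠ D) (p : F[X]) (g : ℕ) (hg : p.natDegree ≤ g)
    (q : F[X]) (hq : q = ∑ i ∈ range (g + 1), C (p.coeff i) * n ^ i * d ^ (g - i))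
    (hs : p.support.Nonempty) :
    (q.natDegree : ℤ) = (g : ℤ) * D + p.support.sup' hs (fun i => (i : ℤ) * ((N : ℤ) - D)) := by
  subst hN hD hq
  have hle : ∀ i ∈ p.support, i ≤ g := fun i hi => (le_natDegree_of_mem_supp i hi).trans hg
  rw [natDegree_sum_C_coeff_mul_pow_mul_pow hn hd hND hg, ← sup'_eq_sup hs, Nat.cast_finsetSup',
    add_sup']
  exact sup'_congr hs rfl fun i hi => Nat.cast_mul_add_tsub_mul (hle i hi) _ _

theorem stmt_1 {F : Type*} [Field F] (n d : F[X]) (hn : n ≠ 0) (hd : d ≠ 0)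
    (hcop : IsCoprime n d) (N D : ℕ) (hN : N = n.natDegree) (hD : D = d.natDegree)
    (hND : N ≠ D) (p : F[X]) (hp : p ≠ 0) (g : ℕ) (hg : p.natDegree ≤ g)
    (q : F[X]) (hq : q = ∑ i ∈ range (g + 1), C (p.coeff i) * n ^ i * d ^ (g - i))
    (hs : p.support.Nonempty) :
    (q.natDegree : ℤ) = (g : ℤ) * D + p.support.sup' hs (fun i => (i : ℤ) * ((N : ℤ) - D)) :=
  stmt_1_general n d hn hd N D hN hD hND p g hg q hq hs
end

section
/- Let F be a field, n(y), d(y) ∈ F[y] nonzero coprime with deg n = deg d = G and leading coefficients n_G, d_G. Let p ∈ F[x] be nonzero of grade g and q(y) = Σ_i p_i n(y)^i d(y)^{g-i}. Then deg q < g·G if and only if p(n_G / d_G) = 0, i.e. (x − n_G d_G^{-1}) divides p(x). -/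
/-! The summand of index `i` has degree at most `iG + (g - i)G = gG`, and its coefficient of
degree `gG` is `pᵢ n_G^i d_G^(g-i)`. Summing, `q` has degree at most `gG` and its coefficient
of degree `gG` is `d_G^g p(n_G / d_G)`; for `g ≥ 1` this vanishes exactly when `deg q < gG`. -/

open Polynomial Finset

section CommSemiring

variable {R : Type*} [CommSemiring R] {n d : R[X]} {G : ℕ}

theorem natDegree_sum_C_mul_pow_mul_pow_le (hn : n.natDegree ≤ G) (hd : d.natDegree ≤ G)
    (p : R[X]) (g : ℕ) :
    (∑ i ∈ range (g + 1), C (p.coeff i) * n ^ i * d ^ (g - i)).natDegree ≤ g * G := by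
  refine natDegree_sum_le_of_forall_le _ _ fun i hi => ?_
  have hig : i * G + (g - i) * G = g * G := by
    rw [← add_mul, Nat.add_sub_cancel' (Nat.lt_succ_iff.mp (mem_range.mp hi))]
  rw [mul_assoc, ← hig]
  exact (natDegree_C_mul_le _ _).trans
    (natDegree_mul_le_of_le (natDegree_pow_le_of_le i hn) (natDegree_pow_le_of_le _ hd))

theorem coeff_sum_C_mul_pow_mul_pow (hn : n.natDegree ≤ G) (hd : d.natDegree ≤ G)
    (p : R[X]) (g : ℕ) :
    (∑ i ∈ range (g + 1), C (p.coeff i) * n ^ i * d ^ (g - i)).coeff (g * G) =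
      ∑ i ∈ range (g + 1), p.coeff i * n.coeff G ^ i * d.coeff G ^ (g - i) := by
  rw [finsetSum_coeff]
  refine sum_congr rfl fun i hi => ?_
  have hig : g * G = i * G + (g - i) * G := by
    rw [← add_mul, Nat.add_sub_cancel' (Nat.lt_succ_iff.mp (mem_range.mp hi))]
  rw [mul_assoc, coeff_C_mul, hig,
    coeff_mul_add_eq_of_natDegree_le (natDegree_pow_le_of_le i hn) (natDegree_pow_le_of_le _ hd),
    coeff_pow_of_natDegree_le hn, coeff_pow_of_natDegree_le hd, mul_assoc]

theorem natDegree_lt_iff_coeff_eq_zero {q : R[X]} {N : ℕ} (hq : q.natDegree ≤ N) (hN : N ≠ 0) :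
    q.natDegree < N ↔ q.coeff N = 0 := by
  refine ⟨coeff_eq_zero_of_natDegree_lt, fun h => hq.lt_of_ne fun hqN => hN ?_⟩
  have hq0 : q = 0 := leadingCoeff_eq_zero.mp (by rwa [leadingCoeff, hqN])
  rw [← hqN, hq0, natDegree_zero]

end CommSemiring

theorem sum_coeff_mul_pow_mul_pow_eq_mul_eval_div {K : Type*} [Field K] {p : K[X]} {g : ℕ}
    (hg : p.natDegree ≤ g) (a : K) {b : K} (hb : b ≠ 0) :
    ∑ i ∈ range (g + 1), p.coeff i * a ^ i * b ^ (g - i) = b ^ g * p.eval (a / b) := by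
  rw [eval_eq_sum_range' (Nat.lt_succ_of_le hg), mul_sum]
  refine sum_congr rfl fun i hi => ?_
  rw [div_pow, ← pow_sub_mul_pow b (Nat.lt_succ_iff.mp (mem_range.mp hi))]
  field_simp

theorem stmt_3_general {F : Type*} [Field F] (n d : F[X]) (hd : d ≠ 0)
    (G : ℕ) (hNn : n.natDegree = G) (hDd : d.natDegree = G)
    (hG1 : 1 ≤ G) (p : F[X]) (hp : p ≠ 0) (g : ℕ) (hg : p.natDegree ≤ g)
    (q : F[X]) (hq : q = ∑ i ∈ range (g + 1), C (p.coeff i) * n ^ i * d ^ (g - i)) :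
    q.natDegree < g * G ↔ p.eval (n.leadingCoeff / d.leadingCoeff) = 0 := by
  rcases g.eq_zero_or_pos with rfl | hg0
  · have hpC := eq_C_of_natDegree_le_zero hg
    have hp0 : p.coeff 0 ≠ 0 := C_ne_zero.mp (hpC ▸ hp)
    rw [hpC, eval_C]
    simpa using hp0
  have hdG : d.coeff G ≠ 0 := hDd ▸ leadingCoeff_ne_zero.mpr hd
  subst hq
  rw [leadingCoeff, leadingCoeff, hNn, hDd,
    natDegree_lt_iff_coeff_eq_zero (natDegree_sum_C_mul_pow_mul_pow_le hNn.le hDd.le p g)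
      (by positivity), coeff_sum_C_mul_pow_mul_pow hNn.le hDd.le,
    sum_coeff_mul_pow_mul_pow_eq_mul_eval_div hg _ hdG, mul_eq_zero]
  simp [hdG]

theorem stmt_3 {F : Type*} [Field F] (n d : F[X]) (hn : n ≠ 0) (hd : d ≠ 0)
    (hcop : IsCoprime n d) (G : ℕ) (hNn : n.natDegree = G) (hDd : d.natDegree = G)
    (hG1 : 1 ≤ G) (p : F[X]) (hp : p ≠ 0) (g : ℕ) (hg : p.natDegree ≤ g)
    (q : F[X]) (hq : q = ∑ i ∈ range (g + 1), C (p.coeff i) * n ^ i * d ^ (g - i)) :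
    q.natDegree < g * G ↔ p.eval (n.leadingCoeff / d.leadingCoeff) = 0 :=
  stmt_3_general n d hd G hNn hDd hG1 p hp g hg q hq
end

section
/- Let F be a field, n(y), d(y) ∈ F[y] nonzero coprime, g ∈ ℕ. The map Φ_g sending a polynomial p ∈ F[x] of degree ≤ g to Σ_{i=0}^{g} p_i n(y)^i d(y)^{g-i} ∈ F[y] is injective. -/
/-! If `Σ cᵢ nⁱ d^(g-i) = 0`, then `d` divides the top term `c_g n^g`, hence divides `c_g` by
coprimality; a constant divisible by a nonconstant polynomial vanishes. Dividing the remaining sum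
by `d` and inducting on `g` kills every coefficient. When `d` is constant, `n` is not, and reading
the sum backwards exchanges the roles of `n` and `d`. -/

open Polynomial Finset

section HomogeneousSum

variable {R : Type*} [CommRing R]

lemma sum_range_succ_mul_pow_mul_pow (c : ℕ → R) (a b : R) (g : ℕ) :
    ∑ i ∈ range (g + 2), c i * a ^ i * b ^ (g + 1 - i)
      = (∑ i ∈ range (g + 1), c i * a ^ i * b ^ (g - i)) * b + c (g + 1) * a ^ (g + 1) := by
  rw [sum_range_succ, Nat.sub_self, pow_zero, mul_one, sum_mul]
  congr 1
  refine sum_congr rfl fun i hi => ?_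
  rw [Nat.sub_add_comm (mem_range_succ_iff.mp hi), pow_succ]
  ring

lemma sum_range_mul_pow_mul_pow_reflect (c : ℕ → R) (a b : R) (g : ℕ) :
    ∑ i ∈ range (g + 1), c i * a ^ i * b ^ (g - i)
      = ∑ i ∈ range (g + 1), c (g - i) * b ^ i * a ^ (g - i) := by
  rw [← sum_range_reflect]
  refine sum_congr rfl fun i hi => ?_
  rw [add_tsub_cancel_right, Nat.sub_sub_self (mem_range_succ_iff.mp hi)]
  ring

lemma IsCoprime.dvd_of_sum_range_mul_pow_mul_pow_eq_zero {a b : R} (hab : IsCoprime a b)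
    {c : ℕ → R} {g : ℕ} (h : ∑ i ∈ range (g + 2), c i * a ^ i * b ^ (g + 1 - i) = 0) :
    b ∣ c (g + 1) := by
  rw [sum_range_succ_mul_pow_mul_pow, add_eq_zero_iff_eq_neg'] at h
  have hdvd : b ∣ c (g + 1) * a ^ (g + 1) := h ▸ (dvd_mul_left b _).neg_right
  exact hab.symm.pow_right.dvd_of_dvd_mul_right hdvd

lemma IsCoprime.eq_zero_of_sum_range_mul_pow_mul_pow_eq_zero [IsDomain R] {a b : R}
    (hab : IsCoprime a b) (hb : b ≠ 0) {c : ℕ → R} (hc : ∀ i, b ∣ c i → c i = 0) :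
    ∀ {g : ℕ}, ∑ i ∈ range (g + 1), c i * a ^ i * b ^ (g - i) = 0 → ∀ i ≤ g, c i = 0
  | 0, h, i, hi => by simpa [Nat.le_zero.mp hi] using h
  | g + 1, h, i, hi => by
    have htop : c (g + 1) = 0 := hc _ (hab.dvd_of_sum_range_mul_pow_mul_pow_eq_zero h)
    rw [sum_range_succ_mul_pow_mul_pow, htop, zero_mul, add_zero, mul_eq_zero_iff_right hb] at h
    obtain hi | rfl := Nat.le_succ_iff.mp hi
    · exact eq_zero_of_sum_range_mul_pow_mul_pow_eq_zero hab hb hc h i hi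
    · exact htop

end HomogeneousSum

lemma Polynomial.C_eq_zero_of_dvd {F : Type*} [Field F] {b : F[X]} (hb : 1 ≤ b.natDegree) {a : F}
    (h : b ∣ C a) : C a = 0 := by
  by_contra ha
  have := natDegree_le_of_dvd h ha
  rw [natDegree_C] at this
  omega

lemma Polynomial.coeff_eq_zero_of_sum_range_C_mul_pow_mul_pow_eq_zero {F : Type*} [Field F]
    {a b : F[X]} (hab : IsCoprime a b) (ha : a ≠ 0) (hb : b ≠ 0)
    (hdeg : 1 ≤ max a.natDegree b.natDegree) {q : ℕ → F} {g : ℕ}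
    (h : ∑ i ∈ range (g + 1), C (q i) * a ^ i * b ^ (g - i) = 0) : ∀ i ≤ g, q i = 0 := by
  intro i hi
  rcases le_max_iff.mp hdeg with ha1 | hb1
  · rw [sum_range_mul_pow_mul_pow_reflect] at h
    have := hab.symm.eq_zero_of_sum_range_mul_pow_mul_pow_eq_zero ha
      (fun j => C_eq_zero_of_dvd ha1) h (g - i) (Nat.sub_le g i)
    rwa [Nat.sub_sub_self hi, C_eq_zero] at this
  · exact C_eq_zero.mp <| hab.eq_zero_of_sum_range_mul_pow_mul_pow_eq_zero hb
      (fun j => C_eq_zero_of_dvd hb1) h i hi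

theorem stmt_5 {F : Type*} [Field F] (n d : F[X]) (hn : n ≠ 0) (hd : d ≠ 0)
    (hcop : IsCoprime n d) (hG1 : 1 ≤ max n.natDegree d.natDegree) (g : ℕ)
    (p₁ p₂ : F[X]) (h₁ : p₁.natDegree ≤ g) (h₂ : p₂.natDegree ≤ g)
    (heq : ∑ i ∈ range (g + 1), C (p₁.coeff i) * n ^ i * d ^ (g - i)
         = ∑ i ∈ range (g + 1), C (p₂.coeff i) * n ^ i * d ^ (g - i)) :
    p₁ = p₂ := by
  have hsub : ∑ i ∈ range (g + 1), C ((p₁ - p₂).coeff i) * n ^ i * d ^ (g - i) = 0 := by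
    simp only [coeff_sub, C_sub, sub_mul, sum_sub_distrib, heq, sub_self]
  have hcoeff := coeff_eq_zero_of_sum_range_C_mul_pow_mul_pow_eq_zero hcop hn hd hG1 hsub
  refine sub_eq_zero.mp (ext fun i => ?_)
  rw [coeff_zero]
  rcases le_or_gt i g with hi | hi
  · exact hcoeff i hi
  · exact coeff_eq_zero_of_natDegree_lt ((natDegree_sub_le_of_le h₁ h₂).trans_lt (by rwa [max_self]))
end
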